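/- For every smooth symmetric matrix field u on ℝ³, (M P u)_i = -(1/2) ∂_i ∂^l (Mu)_l; in particular, if M u has vanishing divergence then M(Pu) = 0. -/

import Mathlib

/-- Partial derivative `∂ᵢ f` of a scalar field on ℝ³ (coordinates `Fin 3 → ℝ`). -/
noncomputable def pd (i : Fin 3) (f : (Fin 3 → ℝ) → ℝ) (x : Fin 3 → ℝ) : ℝ :=
  fderiv ℝ f x (Pi.single i 1)

/-- Kronecker delta. -/
def kd (i j : Fin 3) : ℝ := if i = j then 1 else 0

/-- `(Lu)_{lji} = ∂_{[l} u_{j]i}`. -/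
noncomputable def Lop (u : (Fin 3 → ℝ) → Fin 3 → Fin 3 → ℝ)
    (l j i : Fin 3) (x : Fin 3 → ℝ) : ℝ :=
  (pd l (fun y => u y j i) x - pd j (fun y => u y l i) x) / 2

/-- `(L*w)_{ij} = -∂^l w_{l(ij)}`. -/
noncomputable def Lstar (w : (Fin 3 → ℝ) → Fin 3 → Fin 3 → Fin 3 → ℝ)
    (i j : Fin 3) (x : Fin 3 → ℝ) : ℝ :=
  -∑ l, pd l (fun y => (w y l i j + w y l j i) / 2) x

/-- `(Mu)_i = ∂^l u_{il} - ∂_i u^l_l`. -/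
noncomputable def Mop (u : (Fin 3 → ℝ) → Fin 3 → Fin 3 → ℝ)
    (i : Fin 3) (x : Fin 3 → ℝ) : ℝ :=
  (∑ l, pd l (fun y => u y i l) x) - pd i (fun y => ∑ l, u y l l) x

/-- Linearized Ricci operator `P`. -/
noncomputable def Pop (u : (Fin 3 → ℝ) → Fin 3 → Fin 3 → ℝ)
    (i j : Fin 3) (x : Fin 3 → ℝ) : ℝ :=
  (1 / 2) * (pd i (fun y => ∑ l, pd l (fun z => u z l j) y) x
    + pd j (fun y => ∑ l, pd l (fun z => u z l i) y) x
    - (∑ l, pd l (fun y => pd l (fun z => u z i j) y) x)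
    - pd i (fun y => pd j (fun z => ∑ l, u z l l) y) x)

/- ## Helper lemmas about `pd` -/

lemma cdx {f : (Fin 3 → ℝ) → ℝ} (hf : ContDiff ℝ (⊤ : ℕ∞) f) (x : Fin 3 → ℝ) :
    DifferentiableAt ℝ f x := hf.differentiable (by simp) x

lemma pd_smooth {f : (Fin 3 → ℝ) → ℝ} (hf : ContDiff ℝ (⊤ : ℕ∞) f) (i : Fin 3) :
    ContDiff ℝ (⊤ : ℕ∞) (pd i f) :=
  (hf.fderiv_right (by simp)).clm_apply contDiff_const

lemma pd_add {f g : (Fin 3 → ℝ) → ℝ} {x : Fin 3 → ℝ} (hf : DifferentiableAt ℝ f x)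
    (hg : DifferentiableAt ℝ g x) (i : Fin 3) :
    pd i (fun y => f y + g y) x = pd i f x + pd i g x := by
  simp [pd, fderiv_fun_add hf hg]

lemma pd_sub {f g : (Fin 3 → ℝ) → ℝ} {x : Fin 3 → ℝ} (hf : DifferentiableAt ℝ f x)
    (hg : DifferentiableAt ℝ g x) (i : Fin 3) :
    pd i (fun y => f y - g y) x = pd i f x - pd i g x := by
  simp [pd, fderiv_fun_sub hf hg]

lemma pd_const_mul {f : (Fin 3 → ℝ) → ℝ} {x : Fin 3 → ℝ} (hf : DifferentiableAt ℝ f x)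
    (c : ℝ) (i : Fin 3) :
    pd i (fun y => c * f y) x = c * pd i f x := by
  simp [pd, fderiv_const_mul hf]

lemma pd_sum {ι : Type*} {s : Finset ι} {f : ι → (Fin 3 → ℝ) → ℝ} {x : Fin 3 → ℝ}
    (h : ∀ b ∈ s, DifferentiableAt ℝ (f b) x) (i : Fin 3) :
    pd i (fun y => ∑ b ∈ s, f b y) x = ∑ b ∈ s, pd i (f b) x := by
  simp [pd, fderiv_fun_sum h]

lemma pd_comm {f : (Fin 3 → ℝ) → ℝ} (hf : ContDiff ℝ (⊤ : ℕ∞) f) (i j : Fin 3) (x : Fin 3 → ℝ) :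
    pd i (pd j f) x = pd j (pd i f) x := by
  have hsymm : IsSymmSndFDerivAt ℝ f x :=
    hf.contDiffAt.isSymmSndFDerivAt (by rw [minSmoothness_of_isRCLikeNormedField]; exact WithTop.coe_le_coe.mpr le_top)
  have hd : DifferentiableAt ℝ (fderiv ℝ f) x :=
    ((hf.fderiv_right (m := (⊤ : ℕ∞)) (by simp)).differentiable (by simp)) x
  have key : ∀ v : Fin 3 → ℝ, fderiv ℝ (fun y => fderiv ℝ f y v) x
      = (fderiv ℝ (fderiv ℝ f) x).flip v := by
    intro v
    rw [fderiv_clm_apply hd (differentiableAt_const v)]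
    ext w
    simp
  change (fderiv ℝ (fun y => fderiv ℝ f y (Pi.single j 1)) x) (Pi.single i 1)
      = (fderiv ℝ (fun y => fderiv ℝ f y (Pi.single i 1)) x) (Pi.single j 1)
  rw [key, key]
  exact hsymm (Pi.single i 1) (Pi.single j 1)

lemma pd_comm3 {g : (Fin 3 → ℝ) → ℝ} (hg : ContDiff ℝ (⊤ : ℕ∞) g) (l m : Fin 3) (x : Fin 3 → ℝ) :
    pd m (pd l (pd l g)) x = pd l (pd l (pd m g)) x := by
  rw [pd_comm (pd_smooth hg l) m l x]
  have h : pd m (pd l g) = pd l (pd m g) := funext fun z => pd_comm hg m l z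
  rw [h]

/- ## Auxiliary fields -/

/-- `S_j = ∂^l u_{lj}`. -/
noncomputable def Sf (u : (Fin 3 → ℝ) → Fin 3 → Fin 3 → ℝ) (j : Fin 3) :
    (Fin 3 → ℝ) → ℝ := fun y => ∑ l, pd l (fun z => u z l j) y

/-- trace of `u`. -/
noncomputable def Tf (u : (Fin 3 → ℝ) → Fin 3 → Fin 3 → ℝ) : (Fin 3 → ℝ) → ℝ :=
  fun y => ∑ l, u y l l

/-- `F = ∂^l ∂^m u_{lm} - Δ tr u`. -/
noncomputable def Ff (u : (Fin 3 → ℝ) → Fin 3 → Fin 3 → ℝ) : (Fin 3 → ℝ) → ℝ :=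
  fun y => (∑ l, pd l (Sf u l) y) - ∑ l, pd l (pd l (Tf u)) y

section Main

variable {u : (Fin 3 → ℝ) → Fin 3 → Fin 3 → ℝ}
variable (hu : ∀ i j, ContDiff ℝ (⊤ : ℕ∞) fun x => u x i j)
variable (hsym : ∀ x i j, u x i j = u x j i)

include hu

lemma Tf_smooth : ContDiff ℝ (⊤ : ℕ∞) (Tf u) := ContDiff.sum fun l _ => hu l l

lemma Sf_smooth (j : Fin 3) : ContDiff ℝ (⊤ : ℕ∞) (Sf u j) :=
  ContDiff.sum fun l _ => pd_smooth (hu l j) l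

lemma FA_smooth : ContDiff ℝ (⊤ : ℕ∞) (fun y => ∑ l, pd l (Sf u l) y) :=
  ContDiff.sum fun l _ => pd_smooth (Sf_smooth hu l) l

lemma FB_smooth : ContDiff ℝ (⊤ : ℕ∞) (fun y => ∑ l, pd l (pd l (Tf u)) y) :=
  ContDiff.sum fun l _ => pd_smooth (pd_smooth (Tf_smooth hu) l) l

/-- Step A : `∂^l (Mu)_l = F`. -/
lemma stepA (hsym : ∀ x i j, u x i j = u x j i) (y : Fin 3 → ℝ) :
    ∑ l, pd l (fun z => Mop u l z) y = Ff u y := by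
  have h1 : ∀ l : Fin 3, pd l (fun z => Mop u l z) y
      = (∑ m, pd l (pd m (fun w => u w l m)) y) - pd l (pd l (Tf u)) y := by
    intro l
    have hf1 : ContDiff ℝ (⊤ : ℕ∞) (fun z => ∑ m, pd m (fun w => u w l m) z) :=
      ContDiff.sum fun m _ => pd_smooth (hu l m) m
    have e : (fun z => Mop u l z)
        = fun z => (fun z' => ∑ m, pd m (fun w => u w l m) z') z - pd l (Tf u) z := rfl
    rw [e, pd_sub (cdx hf1 y) (cdx (pd_smooth (Tf_smooth hu) l) y) l]
    congr 1
    exact pd_sum (fun m _ => cdx (pd_smooth (hu l m) m) y) l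
  have h2 : ∀ l : Fin 3, pd l (Sf u l) y = ∑ m, pd l (pd m (fun w => u w l m)) y := by
    intro l
    have : pd l (Sf u l) y = ∑ m, pd l (pd m (fun w => u w m l)) y :=
      pd_sum (fun m _ => cdx (pd_smooth (hu m l) m) y) l
    rw [this]
    refine Finset.sum_congr rfl fun m _ => ?_
    have : (fun w => u w m l) = fun w => u w l m := funext fun w => hsym w m l
    rw [this]
  simp only [h1, Ff, Finset.sum_sub_distrib]
  congr 1
  exact Finset.sum_congr rfl fun l _ => (h2 l).symm

/-- Step B : `tr (Pu) = F`. -/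
lemma stepB (hsym : ∀ x i j, u x i j = u x j i) (y : Fin 3 → ℝ) :
    ∑ l, Pop u l l y = Ff u y := by
  have h1 : ∀ l : Fin 3, Pop u l l y
      = (1 / 2) * (pd l (Sf u l) y + pd l (Sf u l) y
          - (∑ m, pd m (pd m (fun w => u w l l)) y) - pd l (pd l (Tf u)) y) := by
    intro l; rfl
  have hlap : ∑ l : Fin 3, ∑ m : Fin 3, pd m (pd m (fun w => u w l l)) y
      = ∑ l : Fin 3, pd l (pd l (Tf u)) y := by
    rw [Finset.sum_comm]
    refine Finset.sum_congr rfl fun m _ => ?_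
    have e : pd m (Tf u) = fun z => ∑ l, pd m (fun w => u w l l) z :=
      funext fun z => pd_sum (fun l _ => cdx (hu l l) z) m
    rw [e, pd_sum (fun l _ => cdx (pd_smooth (hu l l) m) y) m]
  simp only [h1, ← Finset.mul_sum, Finset.sum_sub_distrib, Finset.sum_add_distrib, hlap, Ff]
  ring

include hsym in
/-- Step C : `∂^l (Pu)_{il} = (1/2) ∂_i F`. -/
lemma stepC (x : Fin 3 → ℝ) (i : Fin 3) :
    ∑ l, pd l (fun y => Pop u i l y) x = (1 / 2) * pd i (Ff u) x := by
  -- per-term expansion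
  have h1 : ∀ l : Fin 3, pd l (fun y => Pop u i l y) x
      = (1 / 2) * (pd l (pd i (Sf u l)) x + pd l (pd l (Sf u i)) x
          - (∑ m, pd l (pd m (pd m (fun w => u w i l))) x)
          - pd l (pd i (pd l (Tf u))) x) := by
    intro l
    have hA : ContDiff ℝ (⊤ : ℕ∞) (pd i (Sf u l)) := pd_smooth (Sf_smooth hu l) i
    have hB : ContDiff ℝ (⊤ : ℕ∞) (pd l (Sf u i)) := pd_smooth (Sf_smooth hu i) l
    have hC : ContDiff ℝ (⊤ : ℕ∞) (fun y => ∑ m, pd m (pd m (fun w => u w i l)) y) :=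
      ContDiff.sum fun m _ => pd_smooth (pd_smooth (hu i l) m) m
    have hD : ContDiff ℝ (⊤ : ℕ∞) (pd i (pd l (Tf u))) :=
      pd_smooth (pd_smooth (Tf_smooth hu) l) i
    have e : (fun y => Pop u i l y)
        = fun y => (1 / 2) * ((fun y' => (fun y'' => pd i (Sf u l) y'' + pd l (Sf u i) y'') y'
            - (fun y'' => ∑ m, pd m (pd m (fun w => u w i l)) y'') y') y
            - pd i (pd l (Tf u)) y) := rfl
    rw [e, pd_const_mul (DifferentiableAt.fun_sub
        (DifferentiableAt.fun_sub (DifferentiableAt.fun_add (cdx hA x) (cdx hB x)) (cdx hC x))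
        (cdx hD x)) (1/2) l,
      pd_sub (DifferentiableAt.fun_sub (DifferentiableAt.fun_add (cdx hA x) (cdx hB x)) (cdx hC x))
        (cdx hD x) l,
      pd_sub (DifferentiableAt.fun_add (cdx hA x) (cdx hB x)) (cdx hC x) l,
      pd_add (cdx hA x) (cdx hB x) l,
      pd_sum (fun m _ => cdx (pd_smooth (pd_smooth (hu i l) m) m) x) l]
  -- the four grouped sums
  have hP : ∑ l : Fin 3, pd l (pd i (Sf u l)) x
      = pd i (fun y => ∑ l, pd l (Sf u l) y) x := by
    rw [pd_sum (fun l _ => cdx (pd_smooth (Sf_smooth hu l) l) x) i]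
    exact Finset.sum_congr rfl fun l _ => pd_comm (Sf_smooth hu l) l i x
  have hQR : ∑ l : Fin 3, pd l (pd l (Sf u i)) x
      = ∑ l : Fin 3, ∑ m : Fin 3, pd l (pd m (pd m (fun w => u w i l))) x := by
    have e1 : ∀ l : Fin 3, pd l (pd l (Sf u i)) x
        = ∑ m, pd l (pd l (pd m (fun w => u w m i))) x := by
      intro l
      have e : pd l (Sf u i) = fun z => ∑ m, pd l (pd m (fun w => u w m i)) z :=
        funext fun z => pd_sum (fun m _ => cdx (pd_smooth (hu m i) m) z) l
      rw [e, pd_sum (fun m _ => cdx (pd_smooth (pd_smooth (hu m i) m) l) x) l]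
    simp only [e1]
    rw [Finset.sum_comm (s := Finset.univ) (t := Finset.univ)
      (f := fun l m => pd l (pd m (pd m (fun w => u w i l))) x)]
    refine Finset.sum_congr rfl fun l _ => Finset.sum_congr rfl fun m _ => ?_
    have hsw : (fun w => u w i m) = fun w => u w m i := funext fun w => hsym w i m
    rw [hsw]
    exact (pd_comm3 (hu m i) l m x).symm
  have hS4 : ∑ l : Fin 3, pd l (pd i (pd l (Tf u))) x
      = pd i (fun y => ∑ l, pd l (pd l (Tf u)) y) x := by
    rw [pd_sum (fun l _ => cdx (pd_smooth (pd_smooth (Tf_smooth hu) l) l) x) i]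
    exact Finset.sum_congr rfl fun l _ =>
      pd_comm (pd_smooth (Tf_smooth hu) l) l i x
  have hFf : pd i (Ff u) x
      = pd i (fun y => ∑ l, pd l (Sf u l) y) x
        - pd i (fun y => ∑ l, pd l (pd l (Tf u)) y) x := by
    have e : Ff u = fun y => (fun y' => ∑ l, pd l (Sf u l) y') y
        - (fun y' => ∑ l, pd l (pd l (Tf u)) y') y := rfl
    rw [e, pd_sub (cdx (FA_smooth hu) x) (cdx (FB_smooth hu) x) i]
  simp only [h1, ← Finset.mul_sum, Finset.sum_sub_distrib, Finset.sum_add_distrib,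
    hP, hQR, hS4, hFf]
  ring

end Main

theorem M_P_identity (u : (Fin 3 → ℝ) → Fin 3 → Fin 3 → ℝ)
    (hu : ∀ i j, ContDiff ℝ (⊤ : ℕ∞) fun x => u x i j)
    (hsym : ∀ x i j, u x i j = u x j i) :
    (∀ (x : Fin 3 → ℝ) (i : Fin 3),
      Mop (fun y a b => Pop u a b y) i x =
        -(1 / 2) * pd i (fun y => ∑ l, pd l (fun z => Mop u l z) y) x) ∧
    ((∀ x : Fin 3 → ℝ, ∑ l, pd l (fun z => Mop u l z) x = 0) →
      ∀ (x : Fin 3 → ℝ) (i : Fin 3), Mop (fun y a b => Pop u a b y) i x = 0) := by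
  have key : ∀ (x : Fin 3 → ℝ) (i : Fin 3),
      Mop (fun y a b => Pop u a b y) i x = -(1 / 2) * pd i (Ff u) x := by
    intro x i
    have e : Mop (fun y a b => Pop u a b y) i x
        = (∑ l, pd l (fun y => Pop u i l y) x) - pd i (fun y => ∑ l, Pop u l l y) x := rfl
    rw [e, stepC hu hsym x i]
    have etr : (fun y => ∑ l, Pop u l l y) = Ff u := funext fun y => stepB hu hsym y
    rw [etr]
    ring
  have hMF : (fun y => ∑ l, pd l (fun z => Mop u l z) y) = Ff u :=
    funext fun y => stepA hu hsym y
  constructor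
  · intro x i
    rw [key x i, hMF]
  · intro H x i
    rw [key x i]
    have : Ff u = fun _ => (0 : ℝ) := by
      rw [← hMF]; exact funext fun y => H y
    rw [this]
    simp [pd, fderiv_const]
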